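/- Let l > 0, T > 0, b > 0, c ≥ 0, and let φ, μ : [0,l] × (0,T) → ℝ be such that φ, ∂_t φ, μ, ∂_x μ, ∂_x² μ exist and are jointly continuous on [0,l] × (0,T). Assume ∂_t φ = ∂_x² μ on [0,l] × (0,T), together with the dynamic (Wentzell type) boundary conditions ∂_t φ(0,t) - b ∂_x μ(0,t) + c μ(0,t) = 0 and ∂_t φ(l,t) + b ∂_x μ(l,t) + c μ(l,t) = 0 for all t ∈ (0,T). Then for every t ∈ (0,T) the total mass m(t) = ∫₀^l φ(x,t) dx + (φ(0,t) + φ(l,t))/b is differentiable with d/dt m(t) = -(c/b)(μ(0,t) + μ(l,t)); in particular, if c = 0 then the total mass ∫₀^l φ(x,t) dx + (φ(0,t) + φ(l,t))/b is constant on (0,T). -/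

import Mathlib

/-!
Integrating `∂_t φ = ∂_x² μ` over `(0,l)` shows that the bulk mass changes at the rate of the flux
`∂_x μ(l,t) - ∂_x μ(0,t)`. By the dynamic boundary conditions the boundary values of `φ`, weighted
by `1/b`, change at the rate of minus this flux plus the reaction terms `-(c/b) μ`, so only the
reaction terms survive in the total mass.
-/

open Set MeasureTheory

theorem hasDerivAt_intervalIntegral_of_continuousOn {E : Type*} [NormedAddCommGroup E]
    [NormedSpace ℝ E] {a b t : ℝ} {U : Set ℝ} (hU : IsOpen U) (ht : t ∈ U) {F F' : ℝ → ℝ → E}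
    (hF : ContinuousOn (fun p : ℝ × ℝ => F p.1 p.2) (uIcc a b ×ˢ U))
    (hF' : ContinuousOn (fun p : ℝ × ℝ => F' p.1 p.2) (uIcc a b ×ˢ U))
    (hderiv : ∀ x ∈ uIcc a b, ∀ τ ∈ U, HasDerivAt (F x ·) (F' x τ) τ) :
    HasDerivAt (fun τ => ∫ x in a..b, F x τ) (∫ x in a..b, F' x t) t := by
  obtain ⟨δ, hδ, hδU⟩ := Metric.nhds_basis_closedBall.mem_iff.1 (hU.mem_nhds ht)
  have hK : uIcc a b ×ˢ Metric.closedBall t δ ⊆ uIcc a b ×ˢ U := prod_mono_right hδU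
  obtain ⟨M, hM⟩ :=
    (isCompact_uIcc.prod (isCompact_closedBall t δ)).exists_bound_of_continuousOn (hF'.mono hK)
  have measurable_slice : ∀ {G : ℝ → ℝ → E},
      ContinuousOn (fun p : ℝ × ℝ => G p.1 p.2) (uIcc a b ×ˢ U) →
      ∀ τ ∈ U, AEStronglyMeasurable (G · τ) (volume.restrict (uIoc a b)) := fun hG τ hτ =>
    ((hG.uncurry_right τ hτ).mono uIoc_subset_uIcc).aestronglyMeasurable measurableSet_uIoc
  refine (intervalIntegral.hasDerivAt_integral_of_dominated_loc_of_deriv_le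
    (F := fun τ x => F x τ) (F' := fun τ x => F' x τ) (bound := fun _ => M)
    (Metric.closedBall_mem_nhds t hδ) ?_
    ((hF.uncurry_right t ht).intervalIntegrable) (measurable_slice hF' t ht) ?_
    intervalIntegrable_const ?_).2
  · filter_upwards [hU.mem_nhds ht] with τ hτ using measurable_slice hF τ hτ
  · exact ae_of_all _ fun x hx τ hτ => hM (x, τ) ⟨uIoc_subset_uIcc hx, hτ⟩
  · exact ae_of_all _ fun x hx τ hτ => hderiv x (uIoc_subset_uIcc hx) τ (hδU hτ)

/-- Mass with respect to `(Ω, dx) ⊕ (∂Ω, dS/b)`. -/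
noncomputable def totalMass (l b : ℝ) (φ : ℝ → ℝ → ℝ) (τ : ℝ) : ℝ :=
  (∫ x in (0 : ℝ)..l, φ x τ) + (φ 0 τ + φ l τ) / b

theorem hasDerivAt_totalMass {l b c t : ℝ} {I : Set ℝ} (hl : 0 ≤ l) (hb : b ≠ 0)
    (hI : IsOpen I) (ht : t ∈ I) {φ μ φt μx μxx : ℝ → ℝ → ℝ}
    (hφt : ∀ x ∈ Icc 0 l, ∀ τ ∈ I, HasDerivAt (φ x ·) (φt x τ) τ)
    (hμxx : ∀ x ∈ Icc 0 l, ∀ τ ∈ I, HasDerivAt (μx · τ) (μxx x τ) x)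
    (hφc : ContinuousOn (fun p : ℝ × ℝ => φ p.1 p.2) (Icc 0 l ×ˢ I))
    (hφtc : ContinuousOn (fun p : ℝ × ℝ => φt p.1 p.2) (Icc 0 l ×ˢ I))
    (hpde : ∀ x ∈ Icc 0 l, ∀ τ ∈ I, φt x τ = μxx x τ)
    (hbc0 : φt 0 t - b * μx 0 t + c * μ 0 t = 0)
    (hbcl : φt l t + b * μx l t + c * μ l t = 0) :
    HasDerivAt (totalMass l b φ) (-(c / b) * (μ 0 t + μ l t)) t := by
  rw [← uIcc_of_le hl] at hφt hμxx hφc hφtc hpde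
  have hbulk : HasDerivAt (fun τ => ∫ x in (0 : ℝ)..l, φ x τ) (μx l t - μx 0 t) t := by
    have hflux : ∫ x in (0 : ℝ)..l, φt x t = μx l t - μx 0 t :=
      intervalIntegral.integral_eq_sub_of_hasDerivAt
        (fun x hx => hpde x hx t ht ▸ hμxx x hx t ht)
        ((hφtc.uncurry_right t ht).intervalIntegrable)
    exact hflux ▸ hasDerivAt_intervalIntegral_of_continuousOn hI ht hφc hφtc hφt
  have hboundary : HasDerivAt (fun τ => (φ 0 τ + φ l τ) / b) ((φt 0 t + φt l t) / b) t :=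
    ((hφt 0 left_mem_uIcc t ht).add (hφt l right_mem_uIcc t ht)).div_const b
  have hbalance : μx l t - μx 0 t + (φt 0 t + φt l t) / b = -(c / b) * (μ 0 t + μ l t) := by
    field_simp
    linear_combination hbc0 + hbcl
  exact (hbulk.add hboundary).congr_deriv hbalance

theorem stmt17_general (l T b c : ℝ) (hl : 0 < l) (hb : 0 < b)
    (φ μ φt μx μxx : ℝ → ℝ → ℝ)
    (hφt : ∀ x ∈ Icc (0 : ℝ) l, ∀ t ∈ Ioo (0 : ℝ) T,
      HasDerivAt (fun τ => φ x τ) (φt x t) t)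
    (hμxx : ∀ x ∈ Icc (0 : ℝ) l, ∀ t ∈ Ioo (0 : ℝ) T,
      HasDerivAt (fun y => μx y t) (μxx x t) x)
    (hφc : ContinuousOn (fun p : ℝ × ℝ => φ p.1 p.2) (Icc (0 : ℝ) l ×ˢ Ioo (0 : ℝ) T))
    (hφtc : ContinuousOn (fun p : ℝ × ℝ => φt p.1 p.2) (Icc (0 : ℝ) l ×ˢ Ioo (0 : ℝ) T))
    (hpde : ∀ x ∈ Icc (0 : ℝ) l, ∀ t ∈ Ioo (0 : ℝ) T, φt x t = μxx x t)
    (hbc0 : ∀ t ∈ Ioo (0 : ℝ) T, φt 0 t - b * μx 0 t + c * μ 0 t = 0)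
    (hbcl : ∀ t ∈ Ioo (0 : ℝ) T, φt l t + b * μx l t + c * μ l t = 0) :
    (∀ t ∈ Ioo (0 : ℝ) T,
      HasDerivAt (fun τ => (∫ x in (0 : ℝ)..l, φ x τ) + (φ 0 τ + φ l τ) / b)
        (-(c / b) * (μ 0 t + μ l t)) t) ∧
    (c = 0 → ∀ t₁ ∈ Ioo (0 : ℝ) T, ∀ t₂ ∈ Ioo (0 : ℝ) T,
      (∫ x in (0 : ℝ)..l, φ x t₁) + (φ 0 t₁ + φ l t₁) / b =
        (∫ x in (0 : ℝ)..l, φ x t₂) + (φ 0 t₂ + φ l t₂) / b) := by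
  have hmass : ∀ t ∈ Ioo (0 : ℝ) T,
      HasDerivAt (totalMass l b φ) (-(c / b) * (μ 0 t + μ l t)) t := fun t ht =>
    hasDerivAt_totalMass hl.le hb.ne' isOpen_Ioo ht hφt hμxx hφc hφtc hpde
      (hbc0 t ht) (hbcl t ht)
  refine ⟨hmass, fun hc t₁ ht₁ t₂ ht₂ => ?_⟩
  subst hc
  exact isOpen_Ioo.is_const_of_deriv_eq_zero isPreconnected_Ioo
    (fun t ht => (hmass t ht).differentiableAt.differentiableWithinAt)
    (fun t ht => by simpa using (hmass t ht).deriv) ht₁ ht₂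

/-- Total mass balance for the one-dimensional Cahn–Hilliard equation `∂_t φ = ∂_x² μ`
on `Ω = (0,l)` with the dynamic (Wentzell type) boundary condition
`∂_t φ + b ∂_n μ + c μ = 0` (the outward normal derivative `∂_n` being `-∂_x` at `x = 0`
and `+∂_x` at `x = l`): the total mass `m(t) = ∫₀^l φ(x,t) dx + (φ(0,t) + φ(l,t))/b`
satisfies `m'(t) = -(c/b)(μ(0,t) + μ(l,t))`; in particular, if `c = 0` then the total
mass is constant on `(0,T)`. Here `φt, μx, μxx` denote `∂_t φ, ∂_x μ, ∂_x² μ`, and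
`φ, ∂_t φ, μ, ∂_x μ, ∂_x² μ` are jointly continuous on `[0,l] × (0,T)`. -/
theorem stmt17 (l T b c : ℝ) (hl : 0 < l) (hT : 0 < T) (hb : 0 < b) (hc : 0 ≤ c)
    (φ μ φt μx μxx : ℝ → ℝ → ℝ)
    (hφt : ∀ x ∈ Icc (0 : ℝ) l, ∀ t ∈ Ioo (0 : ℝ) T,
      HasDerivAt (fun τ => φ x τ) (φt x t) t)
    (hμx : ∀ x ∈ Icc (0 : ℝ) l, ∀ t ∈ Ioo (0 : ℝ) T,
      HasDerivAt (fun y => μ y t) (μx x t) x)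
    (hμxx : ∀ x ∈ Icc (0 : ℝ) l, ∀ t ∈ Ioo (0 : ℝ) T,
      HasDerivAt (fun y => μx y t) (μxx x t) x)
    (hφc : ContinuousOn (fun p : ℝ × ℝ => φ p.1 p.2) (Icc (0 : ℝ) l ×ˢ Ioo (0 : ℝ) T))
    (hφtc : ContinuousOn (fun p : ℝ × ℝ => φt p.1 p.2) (Icc (0 : ℝ) l ×ˢ Ioo (0 : ℝ) T))
    (hμc : ContinuousOn (fun p : ℝ × ℝ => μ p.1 p.2) (Icc (0 : ℝ) l ×ˢ Ioo (0 : ℝ) T))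
    (hμxc : ContinuousOn (fun p : ℝ × ℝ => μx p.1 p.2) (Icc (0 : ℝ) l ×ˢ Ioo (0 : ℝ) T))
    (hμxxc : ContinuousOn (fun p : ℝ × ℝ => μxx p.1 p.2) (Icc (0 : ℝ) l ×ˢ Ioo (0 : ℝ) T))
    (hpde : ∀ x ∈ Icc (0 : ℝ) l, ∀ t ∈ Ioo (0 : ℝ) T, φt x t = μxx x t)
    (hbc0 : ∀ t ∈ Ioo (0 : ℝ) T, φt 0 t - b * μx 0 t + c * μ 0 t = 0)
    (hbcl : ∀ t ∈ Ioo (0 : ℝ) T, φt l t + b * μx l t + c * μ l t = 0) :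
    (∀ t ∈ Ioo (0 : ℝ) T,
      HasDerivAt (fun τ => (∫ x in (0 : ℝ)..l, φ x τ) + (φ 0 τ + φ l τ) / b)
        (-(c / b) * (μ 0 t + μ l t)) t) ∧
    (c = 0 → ∀ t₁ ∈ Ioo (0 : ℝ) T, ∀ t₂ ∈ Ioo (0 : ℝ) T,
      (∫ x in (0 : ℝ)..l, φ x t₁) + (φ 0 t₁ + φ l t₁) / b =
        (∫ x in (0 : ℝ)..l, φ x t₂) + (φ 0 t₂ + φ l t₂) / b) :=
  stmt17_general l T b c hl hb φ μ φt μx μxx hφt hμxx hφc hφtc hpde hbc0 hbcl
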